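/- In the heterogeneous setup with λ > 0, the stacked vectorized gradient of the heterogeneous energy satisfies, for every Y, vec(∇ℓ(Y)) = vec(Y) − vec(B) + λ (Q − P + D_blk) vec(Y), where vec(∇ℓ(Y)) concatenates vec(∇_{Y_s} ℓ(Y)) over s ∈ S and vec(B) concatenates vec(B_s) over s ∈ S. -/

import Mathlib

open Matrix Kronecker BigOperators

/-- **Heterogeneous setup.**  `S` is a finite set of node types; each `s : S` has `n s`
nodes and feature dimension `d s ≥ 1`.  For each ordered pair of node types `(s, s')`,
`T s s'` is the (finite) set of edge types connecting them; each `t : T s s'` carries a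
0/1 adjacency matrix `A t ∈ ℝ^{n s × n s'}` and a compatibility matrix
`H t ∈ ℝ^{d s × d s'}`.  The edge types are closed under inversion: `einv t : T s' s`
satisfies `einv (einv t) = t` and `A (einv t) = (A t)ᵀ`. -/
structure HeteroSetup where
  S : Type
  [fintypeS : Fintype S]
  [decEqS : DecidableEq S]
  n : S → ℕ
  d : S → ℕ
  d_pos : ∀ s, 1 ≤ d s
  T : S → S → Type
  [fintypeT : ∀ s s', Fintype (T s s')]
  A : ∀ {s s' : S}, T s s' → Matrix (Fin (n s)) (Fin (n s')) ℝ
  H : ∀ {s s' : S}, T s s' → Matrix (Fin (d s)) (Fin (d s')) ℝ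
  einv : ∀ {s s' : S}, T s s' → T s' s
  einv_einv : ∀ {s s' : S} (t : T s s'), einv (einv t) = t
  A_einv : ∀ {s s' : S} (t : T s s'), A (einv t) = (A t)ᵀ
  A_zero_one : ∀ {s s' : S} (t : T s s') (i : Fin (n s)) (j : Fin (n s')),
    A t i j = 0 ∨ A t i j = 1

attribute [instance] HeteroSetup.fintypeS HeteroSetup.decEqS HeteroSetup.fintypeT

namespace HeteroSetup

variable (hg : HeteroSetup)

/-- The space of node embeddings `Y = (Y_s)_{s ∈ S}`, `Y_s ∈ ℝ^{n_s × d_s}`. -/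
abbrev Emb := ∀ s : hg.S, Matrix (Fin (hg.n s)) (Fin (hg.d s)) ℝ

/-- The type-`t` degree matrix `D_{st}` of type-`s` nodes: the diagonal matrix of the
row sums of `A t` for `t ∈ T_{ss'}`. -/
noncomputable def Dst {s s' : hg.S} (t : hg.T s s') : Matrix (Fin (hg.n s)) (Fin (hg.n s)) ℝ :=
  Matrix.diagonal fun i => ∑ j, hg.A t i j

/-- `D_s = Σ_{s'∈S} Σ_{t∈T_{ss'}} D_{st}`. -/
noncomputable def Dtot (s : hg.S) : Matrix (Fin (hg.n s)) (Fin (hg.n s)) ℝ :=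
  ∑ s' : hg.S, ∑ t : hg.T s s', hg.Dst t

/-- The heterogeneous energy
`ℓ(Y) = Σ_s [ (1/2)‖Y_s − B_s‖_F² + (λ/2) Σ_{s'} Σ_{t ∈ T_{ss'}} Σ_{(i,j) : (A_t)_{ij} = 1}
‖(Y_s)_{i,:} H_t − (Y_{s'})_{j,:}‖² ]`.  Since the entries of `A t` are 0 or 1, the sum
over the edges `(i,j)` with `(A_t)_{ij} = 1` is written with the weight `A t i j`. -/
noncomputable def energy (lam : ℝ) (B : hg.Emb) (Y : hg.Emb) : ℝ :=
  ∑ s : hg.S,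
    ((1 / 2 : ℝ) * ∑ i, ∑ k, (Y s i k - B s i k) ^ 2 +
      lam / 2 * ∑ s' : hg.S, ∑ t : hg.T s s', ∑ i, ∑ j,
        hg.A t i j * ∑ k', ((Y s i ᵥ* hg.H t) k' - Y s' j k') ^ 2)

/-- The global index set for the stacked column-vectorization `vec(Y)`: node type `s`,
column (feature) index `k : Fin (d s)`, row (node) index `i : Fin (n s)`. -/
abbrev Idx := Σ s : hg.S, Fin (hg.d s) × Fin (hg.n s)

/-- The stacked column-vectorization `vec(Y)`, concatenating `vec(Y_s)` over `s ∈ S`: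
`vec(Y)⟨s, (k, i)⟩ = (Y_s)_{ik}`. -/
noncomputable def vecOf (Y : hg.Emb) : hg.Idx → ℝ := fun x => Y x.1 x.2.2 x.2.1

/-- The block matrix `P` with blocks `P_{ss'} = Σ_{t∈T_{ss'}} (H_t + H_{t_inv}ᵀ) ⊗ A_t`
(entrywise: the `((k,i),(k',j))` entry of the `(s,s')` block is
`(H_t + H_{t_inv}ᵀ)_{k k'} (A_t)_{i j}`). -/
noncomputable def Pmat : Matrix hg.Idx hg.Idx ℝ := fun x y =>
  ∑ t : hg.T x.1 y.1, (hg.H t + (hg.H (hg.einv t))ᵀ) x.2.1 y.2.1 * hg.A t x.2.2 y.2.2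

/-- The block-diagonal matrix `Q` with diagonal blocks
`Q_s = Σ_{s'∈S} Σ_{t∈T_{ss'}} (H_t H_tᵀ ⊗ D_{st})`. -/
noncomputable def Qmat : Matrix hg.Idx hg.Idx ℝ :=
  Matrix.blockDiagonal' fun s => ∑ s' : hg.S, ∑ t : hg.T s s',
    (hg.H t * (hg.H t)ᵀ) ⊗ₖ hg.Dst t

/-- The block-diagonal matrix `D_blk` with diagonal blocks `I_{d_s} ⊗ D_s`. -/
noncomputable def Dblk : Matrix hg.Idx hg.Idx ℝ :=
  Matrix.blockDiagonal' fun s => (1 : Matrix (Fin (hg.d s)) (Fin (hg.d s)) ℝ) ⊗ₖ hg.Dtot s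

end HeteroSetup

/-!
Vectorized, the energy is the quadratic `½‖y - b‖² + (λ/2) yᵀ M y` with `M = Q - P + D_blk`
symmetric, and the gradient of `½‖x - b‖² + (c/2)⟪x, T x⟫` for self-adjoint `T` is
`x - b + c T x`. To identify `M`, expand each edge term `‖y_i H_t - y'_j‖²` into a degree term
on the source side (giving `Q`), a cross term, and a degree term on the target side. Inversion
`t ↦ t_inv` is a bijection between edge types with `A_{t_inv} = A_tᵀ`: it moves the target-side
degree terms to the source side (giving `D_blk`), and it shows that `P = Phalf + Phalfᵀ` for the
matrix `Phalf` with blocks `Σ_t H_t ⊗ A_t`, so `yᵀ P y` counts each cross term twice.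
-/

open scoped RealInnerProductSpace in
theorem hasGradientAt_half_norm_sub_sq_add_inner_self {E : Type*} [NormedAddCommGroup E]
    [InnerProductSpace ℝ E] [CompleteSpace E] {T : E →L[ℝ] E}
    (hT : (T : E →ₗ[ℝ] E).IsSymmetric) (c : ℝ) (b w : E) :
    HasGradientAt (fun x => 1 / 2 * ‖x - b‖ ^ 2 + c / 2 * ⟪x, T x⟫) (w - b + c • T w) w := by
  rw [hasGradientAt_iff_hasFDerivAt]
  have hnorm := ((hasFDerivAt_id w).sub_const b).norm_sq
  have hinner := (hasFDerivAt_id w).inner ℝ T.hasFDerivAt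
  refine ((hnorm.const_mul _).add (hinner.const_mul _)).congr_fderiv ?_
  ext u
  have hTwu : ⟪w, T u⟫ = ⟪u, T w⟫ := (hT w u).symm.trans (real_inner_comm u (T w))
  simp [fderivInnerCLM_apply, real_inner_comm, hTwu]
  ring

namespace Matrix

theorem sum_sum_mul_dotProduct_self_sub {R m n k : Type*} [CommRing R] [Fintype m]
    [Fintype n] [Fintype k] (A : Matrix m n R) (u : m → k → R) (v : n → k → R) :
    ∑ i, ∑ j, A i j * ((u i - v j) ⬝ᵥ (u i - v j))
      = ∑ i, (∑ j, A i j) * (u i ⬝ᵥ u i) - 2 * ∑ i, ∑ j, A i j * (u i ⬝ᵥ v j)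
        + ∑ j, (∑ i, A i j) * (v j ⬝ᵥ v j) := by
  have hexpand : ∀ i j, A i j * ((u i - v j) ⬝ᵥ (u i - v j))
      = A i j * (u i ⬝ᵥ u i) - 2 * (A i j * (u i ⬝ᵥ v j)) + A i j * (v j ⬝ᵥ v j) := by
    intro i j
    simp only [sub_dotProduct, dotProduct_sub, dotProduct_comm (v j) (u i)]
    ring
  simp only [hexpand, Finset.sum_add_distrib, Finset.sum_sub_distrib, Finset.sum_mul,
    Finset.mul_sum]
  rw [Finset.sum_comm (f := fun i j => A i j * (v j ⬝ᵥ v j))]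

section Kronecker

variable {R : Type*} [CommSemiring R] {m n p q : Type*} [Fintype m] [Fintype n] [Fintype p]
  [Fintype q]

theorem dotProduct_mul_transpose_mulVec (H : Matrix m n R) (v : m → R) :
    v ⬝ᵥ (H * Hᵀ) *ᵥ v = (v ᵥ* H) ⬝ᵥ (v ᵥ* H) := by
  rw [← mulVec_mulVec, dotProduct_mulVec, mulVec_transpose]

theorem vec_dotProduct_kronecker_mulVec_vec (K : Matrix p q R) (L : Matrix m n R)
    (Y : Matrix m p R) (Z : Matrix n q R) :
    vec Y ⬝ᵥ (K ⊗ₖ L) *ᵥ vec Z = ∑ i, ∑ j, L i j * (Y i ⬝ᵥ K *ᵥ Z j) := by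
  simp only [dotProduct, mulVec, kroneckerMap_apply, vec, Fintype.sum_prod_type, Finset.mul_sum]
  rw [Finset.sum_comm]
  refine Finset.sum_congr rfl fun i _ => ?_
  rw [Finset.sum_comm (s := Finset.univ (α := n))]
  refine Finset.sum_congr rfl fun k _ => ?_
  rw [Finset.sum_comm (s := Finset.univ (α := n))]
  refine Finset.sum_congr rfl fun l _ => Finset.sum_congr rfl fun j _ => ?_
  ring

theorem vec_dotProduct_kronecker_diagonal_mulVec_vec [DecidableEq m] (K : Matrix p q R)
    (a : m → R) (Y : Matrix m p R) (Z : Matrix m q R) :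
    vec Y ⬝ᵥ (K ⊗ₖ diagonal a) *ᵥ vec Z = ∑ i, a i * (Y i ⬝ᵥ K *ᵥ Z i) := by
  rw [vec_dotProduct_kronecker_mulVec_vec]
  refine Finset.sum_congr rfl fun i _ => ?_
  rw [Finset.sum_eq_single i (fun j _ hji => by rw [diagonal_apply_ne a hji.symm, zero_mul])
    (by simp), diagonal_apply_eq]

end Kronecker

section Sigma

variable {S : Type*} [Fintype S] {m n : S → Type*} [∀ s, Fintype (m s)] [∀ s, Fintype (n s)]
  {R : Type*} [CommSemiring R]

theorem dotProduct_mulVec_sigma (M : Matrix (Σ s, m s) (Σ s, n s) R)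
    (v : (Σ s, m s) → R) (w : (Σ s, n s) → R) :
    v ⬝ᵥ M *ᵥ w = ∑ s, ∑ s', (fun p => v ⟨s, p⟩) ⬝ᵥ
      (of fun p q => M ⟨s, p⟩ ⟨s', q⟩) *ᵥ (fun q => w ⟨s', q⟩) := by
  simp only [dotProduct, mulVec, Fintype.sum_sigma, Finset.mul_sum, of_apply]
  exact Finset.sum_congr rfl fun s _ => Finset.sum_comm

theorem dotProduct_blockDiagonal'_mulVec [DecidableEq S] (M : ∀ s, Matrix (m s) (n s) R)
    (v : (Σ s, m s) → R) (w : (Σ s, n s) → R) :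
    v ⬝ᵥ blockDiagonal' M *ᵥ w = ∑ s, (fun p => v ⟨s, p⟩) ⬝ᵥ M s *ᵥ (fun q => w ⟨s, q⟩) := by
  rw [dotProduct_mulVec_sigma]
  refine Finset.sum_congr rfl fun s _ => ?_
  rw [Finset.sum_eq_single s (fun s' _ hs' => ?_) (by simp)]
  · simp only [blockDiagonal'_apply_eq]
    rfl
  · simp [blockDiagonal'_apply_ne M _ _ hs'.symm, dotProduct, mulVec]

end Sigma

end Matrix

namespace HeteroSetup

variable (hg : HeteroSetup)

def einvEquiv (s s' : hg.S) : hg.T s s' ≃ hg.T s' s :=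
  ⟨hg.einv, hg.einv, hg.einv_einv, hg.einv_einv⟩

theorem sum_sum_sum_einv {M : Type*} [AddCommMonoid M] (f : ∀ s s', hg.T s s' → M) :
    ∑ s, ∑ s', ∑ t : hg.T s s', f s' s (hg.einv t) = ∑ s, ∑ s', ∑ t : hg.T s s', f s s' t := by
  rw [Finset.sum_comm]
  exact Finset.sum_congr rfl fun s _ => Finset.sum_congr rfl fun s' _ =>
    (hg.einvEquiv s' s).sum_comp (f s s')

def Phalf : Matrix hg.Idx hg.Idx ℝ :=
  of fun x y => ∑ t : hg.T x.1 y.1, hg.H t x.2.1 y.2.1 * hg.A t x.2.2 y.2.2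

theorem Pmat_eq_Phalf_add_transpose : hg.Pmat = hg.Phalf + hg.Phalfᵀ := by
  ext ⟨s, k, i⟩ ⟨s', k', j⟩
  simp only [Pmat, Phalf, Matrix.add_apply, transpose_apply, of_apply, add_mul,
    Finset.sum_add_distrib]
  congr 1
  rw [← (hg.einvEquiv s s').sum_comp]
  refine Finset.sum_congr rfl fun t _ => ?_
  simp [einvEquiv, hg.A_einv]

theorem isSymm_Pmat : hg.Pmat.IsSymm := by
  rw [Pmat_eq_Phalf_add_transpose]
  exact isSymm_add_transpose_self _

theorem isSymm_Qmat : hg.Qmat.IsSymm := by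
  simp [IsSymm, Qmat, blockDiagonal'_transpose, transpose_sum, ← kroneckerMap_transpose,
    transpose_mul, Dst]

theorem isSymm_Dblk : hg.Dblk.IsSymm := by
  simp [IsSymm, Dblk, blockDiagonal'_transpose, ← kroneckerMap_transpose, Dtot, transpose_sum,
    Dst]

theorem Dtot_eq_diagonal (s : hg.S) :
    hg.Dtot s = diagonal fun i => ∑ s', ∑ t : hg.T s s', ∑ j, hg.A t i j := by
  ext i i'
  by_cases h : i = i' <;> simp [Dtot, Dst, Matrix.sum_apply, h]

theorem vecOf_comp_mk (Y : hg.Emb) (s : hg.S) : (fun p => hg.vecOf Y ⟨s, p⟩) = vec (Y s) := rfl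

theorem vecOf_dotProduct_Qmat_mulVec (Y : hg.Emb) :
    hg.vecOf Y ⬝ᵥ hg.Qmat *ᵥ hg.vecOf Y = ∑ s, ∑ s', ∑ t : hg.T s s',
      ∑ i, (∑ j, hg.A t i j) * ((Y s i ᵥ* hg.H t) ⬝ᵥ (Y s i ᵥ* hg.H t)) := by
  simp only [Qmat, dotProduct_blockDiagonal'_mulVec, vecOf_comp_mk, sum_mulVec, dotProduct_sum,
    Dst, vec_dotProduct_kronecker_diagonal_mulVec_vec, dotProduct_mul_transpose_mulVec]

theorem vecOf_dotProduct_Dblk_mulVec (Y : hg.Emb) :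
    hg.vecOf Y ⬝ᵥ hg.Dblk *ᵥ hg.vecOf Y = ∑ s, ∑ s', ∑ t : hg.T s s',
      ∑ i, (∑ j, hg.A t i j) * (Y s i ⬝ᵥ Y s i) := by
  simp only [Dblk, dotProduct_blockDiagonal'_mulVec, vecOf_comp_mk, Dtot_eq_diagonal,
    vec_dotProduct_kronecker_diagonal_mulVec_vec, one_mulVec, Finset.sum_mul]
  refine Finset.sum_congr rfl fun s _ => ?_
  rw [Finset.sum_comm]
  exact Finset.sum_congr rfl fun s' _ => Finset.sum_comm

theorem vecOf_dotProduct_Dblk_mulVec' (Y : hg.Emb) :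
    hg.vecOf Y ⬝ᵥ hg.Dblk *ᵥ hg.vecOf Y = ∑ s, ∑ s', ∑ t : hg.T s s',
      ∑ j, (∑ i, hg.A t i j) * (Y s' j ⬝ᵥ Y s' j) := by
  rw [vecOf_dotProduct_Dblk_mulVec, ← sum_sum_sum_einv]
  simp [hg.A_einv]

theorem vecOf_dotProduct_Phalf_mulVec (Y : hg.Emb) :
    hg.vecOf Y ⬝ᵥ hg.Phalf *ᵥ hg.vecOf Y = ∑ s, ∑ s', ∑ t : hg.T s s',
      ∑ i, ∑ j, hg.A t i j * ((Y s i ᵥ* hg.H t) ⬝ᵥ Y s' j) := by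
  rw [dotProduct_mulVec_sigma]
  refine Finset.sum_congr rfl fun s _ => Finset.sum_congr rfl fun s' _ => ?_
  have hblock : (of fun p q => hg.Phalf ⟨s, p⟩ ⟨s', q⟩) = ∑ t : hg.T s s', hg.H t ⊗ₖ hg.A t := by
    ext p q
    simp [Phalf, Matrix.sum_apply]
  simp only [hblock, vecOf_comp_mk, sum_mulVec, dotProduct_sum,
    vec_dotProduct_kronecker_mulVec_vec]
  simp only [dotProduct_mulVec]

theorem vecOf_dotProduct_Pmat_mulVec (Y : hg.Emb) :
    hg.vecOf Y ⬝ᵥ hg.Pmat *ᵥ hg.vecOf Y = 2 * ∑ s, ∑ s', ∑ t : hg.T s s',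
      ∑ i, ∑ j, hg.A t i j * ((Y s i ᵥ* hg.H t) ⬝ᵥ Y s' j) := by
  rw [Pmat_eq_Phalf_add_transpose, add_mulVec, dotProduct_add, dotProduct_transpose_mulVec,
    vecOf_dotProduct_Phalf_mulVec, two_mul]

theorem sum_edge_energy_eq_dotProduct (Y : hg.Emb) :
    ∑ s, ∑ s', ∑ t : hg.T s s', ∑ i, ∑ j,
        hg.A t i j * ∑ k', ((Y s i ᵥ* hg.H t) k' - Y s' j k') ^ 2
      = hg.vecOf Y ⬝ᵥ (hg.Qmat - hg.Pmat + hg.Dblk) *ᵥ hg.vecOf Y := by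
  have hsq : ∀ {k : Type} [Fintype k] (x y : k → ℝ),
      ∑ k', (x k' - y k') ^ 2 = (x - y) ⬝ᵥ (x - y) :=
    fun x y => by simp [dotProduct, sq]
  have hedge := fun s s' (t : hg.T s s') =>
    sum_sum_mul_dotProduct_self_sub (hg.A t) (fun i => Y s i ᵥ* hg.H t) (Y s')
  simp only [hsq]
  rw [add_mulVec, sub_mulVec, dotProduct_add, dotProduct_sub, vecOf_dotProduct_Qmat_mulVec,
    vecOf_dotProduct_Pmat_mulVec, vecOf_dotProduct_Dblk_mulVec']
  simp only [hedge, Finset.sum_add_distrib, Finset.sum_sub_distrib, Finset.mul_sum]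

theorem energy_eq_dotProduct (lam : ℝ) (B Y : hg.Emb) :
    hg.energy lam B Y
      = 1 / 2 * ((hg.vecOf Y - hg.vecOf B) ⬝ᵥ (hg.vecOf Y - hg.vecOf B))
        + lam / 2 * (hg.vecOf Y ⬝ᵥ (hg.Qmat - hg.Pmat + hg.Dblk) *ᵥ hg.vecOf Y) := by
  rw [energy, Finset.sum_add_distrib, ← Finset.mul_sum, ← Finset.mul_sum,
    sum_edge_energy_eq_dotProduct]
  congr 2
  simp only [dotProduct, Fintype.sum_sigma, Fintype.sum_prod_type, vecOf, Pi.sub_apply, sq]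
  exact Finset.sum_congr rfl fun s _ => Finset.sum_comm

end HeteroSetup

open Matrix HeteroSetup

theorem stmt2_general (hg : HeteroSetup) (lam : ℝ) (B : hg.Emb) (Y : hg.Emb) :
    HasGradientAt
      (fun v : EuclideanSpace ℝ hg.Idx =>
        hg.energy lam B (fun s => Matrix.of fun i k => v ⟨s, (k, i)⟩))
      ((WithLp.equiv 2 _).symm
        (hg.vecOf Y - hg.vecOf B + lam • ((hg.Qmat - hg.Pmat + hg.Dblk) *ᵥ hg.vecOf Y)))
      ((WithLp.equiv 2 _).symm (hg.vecOf Y)) := by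
  set M := hg.Qmat - hg.Pmat + hg.Dblk
  have hM : M.IsSymm := (hg.isSymm_Qmat.sub hg.isSymm_Pmat).add hg.isSymm_Dblk
  have hT : (toEuclideanCLM (𝕜 := ℝ) M : EuclideanSpace ℝ hg.Idx →ₗ[ℝ] _).IsSymmetric := by
    rwa [coe_toEuclideanCLM_eq_toEuclideanLin, isSymmetric_toEuclideanLin_iff,
      isHermitian_iff_isSymm]
  refine (hasGradientAt_half_norm_sub_sq_add_inner_self hT lam (WithLp.toLp 2 (hg.vecOf B))
    (WithLp.toLp 2 (hg.vecOf Y))).congr_of_eventuallyEq (Filter.Eventually.of_forall fun w => ?_)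
  dsimp only
  rw [energy_eq_dotProduct, inner_toEuclideanCLM, ← real_inner_self_eq_norm_sq]
  -- the embedding read off `w` has `vecOf` equal to `w`, and the real inner product is `⬝ᵥ`
  rfl

/-- In the heterogeneous setup with λ > 0, the stacked vectorized
gradient of the heterogeneous energy satisfies, for every `Y`,
`vec(∇ℓ(Y)) = vec(Y) − vec(B) + λ (Q − P + D_blk) vec(Y)`.
The gradient of ℓ, viewed through the vectorization as a function on the Euclidean space
indexed by `Idx` (whose inner product is the stacked Frobenius inner product), is
expressed via `HasGradientAt`. -/
theorem stmt2 (hg : HeteroSetup) (lam : ℝ) (hlam : 0 < lam) (B : hg.Emb) (Y : hg.Emb) :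
    HasGradientAt
      (fun v : EuclideanSpace ℝ hg.Idx =>
        hg.energy lam B (fun s => Matrix.of fun i k => v ⟨s, (k, i)⟩))
      ((WithLp.equiv 2 _).symm
        (hg.vecOf Y - hg.vecOf B + lam • ((hg.Qmat - hg.Pmat + hg.Dblk) *ᵥ hg.vecOf Y)))
      ((WithLp.equiv 2 _).symm (hg.vecOf Y)) :=
  stmt2_general hg lam B Y
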